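/- Let M and M' = M + E be column-stochastic matrices with invariant probability vectors u and v respectively, and suppose τ(M) < 1 (ergodicity coefficient). Then ‖v − u‖₁ ≤ ‖E‖₁ ‖v‖₁ / (1 − τ(M)) ≤ ‖E‖₁ / (1 − τ(M)). -/
import Mathlib

/-- Ergodicity coefficient of a matrix. -/
noncomputable def ergCoeff {N : ℕ} (M : Matrix (Fin (N+1)) (Fin (N+1)) ℝ) : ℝ :=
  (1/2) * Finset.univ.sup' Finset.univ_nonempty
    (fun jj : Fin (N+1) × Fin (N+1) => ∑ i, |M i jj.1 - M i jj.2|)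

/-- ℓ¹ operator norm of a matrix: the maximal column absolute sum. -/
noncomputable def l1opNorm {N : ℕ} (A : Matrix (Fin (N+1)) (Fin (N+1)) ℝ) : ℝ :=
  Finset.univ.sup' Finset.univ_nonempty fun j => ∑ i, |A i j|

lemma col_diff_le {N : ℕ} (M : Matrix (Fin (N+1)) (Fin (N+1)) ℝ) (j k : Fin (N+1)) :
    ∑ i, |M i j - M i k| ≤ 2 * ergCoeff M := by
  have h := Finset.le_sup' (fun jj : Fin (N+1) × Fin (N+1) => ∑ i, |M i jj.1 - M i jj.2|)
    (Finset.mem_univ (j, k))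
  simp only at h
  unfold ergCoeff
  linarith

lemma mulVec_l1_bound {N : ℕ} (A : Matrix (Fin (N+1)) (Fin (N+1)) ℝ) (y : Fin (N+1) → ℝ) :
    ∑ i, |A.mulVec y i| ≤ l1opNorm A * ∑ j, |y j| := by
  have h1 : ∀ i, |A.mulVec y i| ≤ ∑ j, |A i j| * |y j| := by
    intro i
    calc |A.mulVec y i| = |∑ j, A i j * y j| := by rfl
    _ ≤ ∑ j, |A i j * y j| := Finset.abs_sum_le_sum_abs _ _
    _ = ∑ j, |A i j| * |y j| := by simp [abs_mul]
  calc ∑ i, |A.mulVec y i| ≤ ∑ i, ∑ j, |A i j| * |y j| :=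
        Finset.sum_le_sum (fun i _ => h1 i)
  _ = ∑ j, (∑ i, |A i j|) * |y j| := by
        rw [Finset.sum_comm]; simp [Finset.sum_mul]
  _ ≤ ∑ j, l1opNorm A * |y j| := by
        apply Finset.sum_le_sum
        intro j _
        exact mul_le_mul_of_nonneg_right
          (Finset.le_sup' (fun j => ∑ i, |A i j|) (Finset.mem_univ j)) (abs_nonneg _)
  _ = l1opNorm A * ∑ j, |y j| := by rw [Finset.mul_sum]

lemma contraction {N : ℕ} (M : Matrix (Fin (N+1)) (Fin (N+1)) ℝ)
    (x : Fin (N+1) → ℝ) (hx : ∑ j, x j = 0) :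
    ∑ i, |M.mulVec x i| ≤ ergCoeff M * ∑ j, |x j| := by
  set p : Fin (N+1) → ℝ := fun j => max (x j) 0 with hp
  set n : Fin (N+1) → ℝ := fun j => max (-x j) 0 with hn
  have hpnn : ∀ j, 0 ≤ p j := fun j => le_max_right _ _
  have hnnn : ∀ j, 0 ≤ n j := fun j => le_max_right _ _
  have hsub : ∀ j, x j = p j - n j := fun j =>
    (max_zero_sub_max_neg_zero_eq_self (x j)).symm
  have habs : ∀ j, |x j| = p j + n j := fun j => by
    rcases le_total (x j) 0 with h | h
    · rw [abs_of_nonpos h]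
      simp [hp, hn, max_eq_right h, max_eq_left (neg_nonneg.mpr h)]
    · rw [abs_of_nonneg h]
      simp [hp, hn, max_eq_left h, max_eq_right (neg_nonpos.mpr h)]
  set s : ℝ := ∑ j, p j with hs
  have hsn : ∑ j, n j = s := by
    have : ∑ j, (p j - n j) = 0 := by
      calc ∑ j, (p j - n j) = ∑ j, x j := Finset.sum_congr rfl (fun j _ => (hsub j).symm)
        _ = 0 := hx
    rw [Finset.sum_sub_distrib] at this
    linarith
  have hs0 : 0 ≤ s := Finset.sum_nonneg (fun j _ => hpnn j)
  rcases eq_or_lt_of_le hs0 with hse | hsp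
  · -- s = 0 : x = 0
    have hpz : ∀ j, p j = 0 := by
      intro j
      have := Finset.sum_eq_zero_iff_of_nonneg (fun j _ => hpnn j) |>.mp hse.symm
      exact this j (Finset.mem_univ j)
    have hnz : ∀ j, n j = 0 := by
      intro j
      have h0 : ∑ j, n j = 0 := by rw [hsn, ← hse]
      exact (Finset.sum_eq_zero_iff_of_nonneg (fun j _ => hnnn j)).mp h0 j (Finset.mem_univ j)
    have hxz : ∀ j, x j = 0 := fun j => by rw [hsub j, hpz j, hnz j]; ring
    have : M.mulVec x = 0 := by
      funext i; simp [Matrix.mulVec, dotProduct]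
      apply Finset.sum_eq_zero; intro j _; rw [hxz j]; ring
    simp [this]
    apply mul_nonneg
    · have := col_diff_le M 0 0
      simp at this
      unfold ergCoeff at this ⊢
      linarith
    · exact Finset.sum_nonneg (fun j _ => abs_nonneg _)
  · -- s > 0
    have key : ∀ i, s * M.mulVec x i = ∑ j, ∑ k, p j * n k * (M i j - M i k) := by
      intro i
      have expand : ∑ j, ∑ k, p j * n k * (M i j - M i k)
          = (∑ k, n k) * (∑ j, p j * M i j) - (∑ j, p j) * (∑ k, n k * M i k) := by
        simp only [mul_sub, Finset.sum_sub_distrib]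
        congr 1
        · rw [Finset.mul_sum]
          apply Finset.sum_congr rfl; intro j _
          rw [Finset.sum_mul]
          apply Finset.sum_congr rfl; intro k _; ring
        · rw [Finset.sum_comm, Finset.mul_sum]
          apply Finset.sum_congr rfl; intro k _
          rw [Finset.sum_mul]
          apply Finset.sum_congr rfl; intro j _; ring
      rw [expand, hsn, ← hs]
      have hmv : M.mulVec x i = ∑ j, p j * M i j - ∑ j, n j * M i j := by
        simp only [Matrix.mulVec, dotProduct]
        rw [← Finset.sum_sub_distrib]
        apply Finset.sum_congr rfl; intro j _
        rw [hsub j]; ring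
      rw [hmv]; ring
    have hbound : ∀ i, s * |M.mulVec x i| ≤ ∑ j, ∑ k, p j * n k * |M i j - M i k| := by
      intro i
      have : s * |M.mulVec x i| = |s * M.mulVec x i| := by
        rw [abs_mul, abs_of_pos hsp]
      rw [this, key i]
      calc |∑ j, ∑ k, p j * n k * (M i j - M i k)|
          ≤ ∑ j, |∑ k, p j * n k * (M i j - M i k)| := Finset.abs_sum_le_sum_abs _ _
        _ ≤ ∑ j, ∑ k, |p j * n k * (M i j - M i k)| :=
            Finset.sum_le_sum (fun j _ => Finset.abs_sum_le_sum_abs _ _)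
        _ = ∑ j, ∑ k, p j * n k * |M i j - M i k| := by
            apply Finset.sum_congr rfl; intro j _
            apply Finset.sum_congr rfl; intro k _
            rw [abs_mul, abs_mul, abs_of_nonneg (hpnn j), abs_of_nonneg (hnnn k)]
    have hsum : s * ∑ i, |M.mulVec x i| ≤ 2 * ergCoeff M * s * s := by
      calc s * ∑ i, |M.mulVec x i| = ∑ i, s * |M.mulVec x i| := by rw [Finset.mul_sum]
        _ ≤ ∑ i, ∑ j, ∑ k, p j * n k * |M i j - M i k| :=
            Finset.sum_le_sum (fun i _ => hbound i)
        _ = ∑ j, ∑ k, p j * n k * ∑ i, |M i j - M i k| := by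
            rw [Finset.sum_comm]
            apply Finset.sum_congr rfl; intro j _
            rw [Finset.sum_comm]
            apply Finset.sum_congr rfl; intro k _
            rw [Finset.mul_sum]
        _ ≤ ∑ j, ∑ k, p j * n k * (2 * ergCoeff M) := by
            apply Finset.sum_le_sum; intro j _
            apply Finset.sum_le_sum; intro k _
            exact mul_le_mul_of_nonneg_left (col_diff_le M j k)
              (mul_nonneg (hpnn j) (hnnn k))
        _ = 2 * ergCoeff M * s * s := by
            simp only [← Finset.sum_mul, ← Finset.mul_sum, hsn, ← hs]
            ring
    have habs_sum : ∑ j, |x j| = 2 * s := by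
      rw [Finset.sum_congr rfl (fun j _ => habs j), Finset.sum_add_distrib, hsn, ← hs]; ring
    rw [habs_sum]
    have := mul_le_mul_of_nonneg_left hsum (le_of_lt (inv_pos.mpr hsp))
    rw [← mul_assoc, inv_mul_cancel₀ (ne_of_gt hsp), one_mul] at this
    calc ∑ i, |M.mulVec x i| ≤ s⁻¹ * (2 * ergCoeff M * s * s) := this
      _ = ergCoeff M * (2 * s) := by field_simp

theorem invariant_measure_perturbation_bound
    (N : ℕ) (M M' : Matrix (Fin (N+1)) (Fin (N+1)) ℝ)
    (hnn : ∀ i j, 0 ≤ M i j) (hcol : ∀ j, ∑ i, M i j = 1)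
    (hnn' : ∀ i j, 0 ≤ M' i j) (hcol' : ∀ j, ∑ i, M' i j = 1)
    (u : Fin (N+1) → ℝ) (hupos : ∀ i, 0 ≤ u i) (husum : ∑ i, u i = 1)
    (hu : M.mulVec u = u)
    (v : Fin (N+1) → ℝ) (hvpos : ∀ i, 0 ≤ v i) (hvsum : ∑ i, v i = 1)
    (hv : M'.mulVec v = v)
    (E : Matrix (Fin (N+1)) (Fin (N+1)) ℝ) (hE : E = M' - M)
    (hτ : ergCoeff M < 1) :
    (∑ i, |v i - u i|) ≤ l1opNorm E * (∑ i, |v i|) / (1 - ergCoeff M) ∧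
    (∑ i, |v i - u i|) ≤ l1opNorm E / (1 - ergCoeff M) := by
  set w : Fin (N+1) → ℝ := fun i => v i - u i with hw
  have hwsum : ∑ j, w j = 0 := by
    simp only [hw, Finset.sum_sub_distrib, husum, hvsum]; ring
  have hdecomp : ∀ i, w i = M.mulVec w i + E.mulVec v i := by
    intro i
    have h1 : M'.mulVec v i = M.mulVec v i + E.mulVec v i := by
      subst hE
      simp [Matrix.sub_mulVec]
    have h2 : M.mulVec w i = M.mulVec v i - M.mulVec u i := by
      have hwe : w = v - u := rfl
      rw [hwe, Matrix.mulVec_sub, Pi.sub_apply]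
    have hv1 : M'.mulVec v i = v i := congrFun hv i
    have hu1 : M.mulVec u i = u i := congrFun hu i
    simp only [hw, h2, hu1]
    linarith
  have hstep : ∑ i, |w i| ≤ ergCoeff M * ∑ j, |w j| + l1opNorm E * ∑ j, |v j| := by
    calc ∑ i, |w i| = ∑ i, |M.mulVec w i + E.mulVec v i| := by
          apply Finset.sum_congr rfl; intro i _; rw [← hdecomp i]
      _ ≤ ∑ i, (|M.mulVec w i| + |E.mulVec v i|) :=
          Finset.sum_le_sum (fun i _ => abs_add_le _ _)
      _ = ∑ i, |M.mulVec w i| + ∑ i, |E.mulVec v i| := Finset.sum_add_distrib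
      _ ≤ ergCoeff M * ∑ j, |w j| + l1opNorm E * ∑ j, |v j| :=
          add_le_add (contraction M w hwsum) (mulVec_l1_bound E v)
  have hτ' : 0 < 1 - ergCoeff M := by linarith
  have hmain : ∑ i, |w i| ≤ l1opNorm E * (∑ j, |v j|) / (1 - ergCoeff M) := by
    rw [le_div_iff₀ hτ']
    nlinarith [hstep]
  have hvabs : ∑ j, |v j| = 1 := by
    rw [Finset.sum_congr rfl (fun j _ => abs_of_nonneg (hvpos j))]; exact hvsum
  constructor
  · exact hmain
  · have := hmain
    rw [hvabs, mul_one] at this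
    exact this
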